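/- For any two policies π' and π, defining L_π(π') = E_{s∼d^π, a∼π(·|s)}[(π'(a|s)/π(a|s)) A_π(s,a)] and ε^{π'} = max_{s∈S} |E_{a∼π'(·|s)}[A_π(s,a)]|, one has L_π(π')/(1−γ) − (2γε^{π'}/(1−γ)^2) E_{s∼d^π}[D_TV(π'‖π)[s]] ≤ J(π') − J(π) ≤ L_π(π')/(1−γ) + (2γε^{π'}/(1−γ)^2) E_{s∼d^π}[D_TV(π'‖π)[s]]. -/

import Mathlib

open Finset

noncomputable section

variable {S A : Type*} [Fintype S] [Fintype A] [DecidableEq S]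

/-- A policy assigns a probability distribution over actions to each state. -/
def IsPolicy (p : S → A → ℝ) : Prop :=
  (∀ s a, 0 ≤ p s a) ∧ ∀ s, ∑ a, p s a = 1

/-- A finite Markov decision process with discount factor `γ ∈ [0,1)`. -/
structure FinMDP (S A : Type*) [Fintype S] [Fintype A] where
  P : S → A → S → ℝ
  P_nonneg : ∀ s a s', 0 ≤ P s a s'
  P_sum : ∀ s a, ∑ s', P s a s' = 1
  r : S → A → ℝ
  μ : S → ℝ
  μ_nonneg : ∀ s, 0 ≤ μ s
  μ_sum : ∑ s, μ s = 1
  γ : ℝ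
  γ_nonneg : 0 ≤ γ
  γ_lt_one : γ < 1

/-- One step of the state-distribution evolution under a policy. -/
def stepDist (M : FinMDP S A) (π : S → A → ℝ) (d : S → ℝ) : S → ℝ :=
  fun s' => ∑ s, ∑ a, d s * π s a * M.P s a s'

/-- Distribution of the state at time `t`, starting from `μ`, following `π`. -/
def stateDist (M : FinMDP S A) (π : S → A → ℝ) : ℕ → S → ℝ
  | 0 => M.μ
  | t + 1 => stepDist M π (stateDist M π t)

/-- Expected discounted return `J(π)` with initial distribution `μ`. -/
def Jret (M : FinMDP S A) (π : S → A → ℝ) : ℝ :=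
  ∑' t : ℕ, M.γ ^ t * ∑ s, stateDist M π t s * ∑ a, π s a * M.r s a

/-- Discounted future state visitation distribution `d^π`. -/
def dVisit (M : FinMDP S A) (π : S → A → ℝ) (s : S) : ℝ :=
  (1 - M.γ) * ∑' t : ℕ, M.γ ^ t * stateDist M π t s

/-- Distribution of the state at time `t` starting deterministically from `s₀`. -/
def stateDistFrom (M : FinMDP S A) (π : S → A → ℝ) (s₀ : S) : ℕ → S → ℝ
  | 0 => fun s => if s = s₀ then 1 else 0
  | t + 1 => stepDist M π (stateDistFrom M π s₀ t)

/-- State value function `V_π(s₀)`: expected discounted return starting from `s₀`. -/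
def Vval (M : FinMDP S A) (π : S → A → ℝ) (s₀ : S) : ℝ :=
  ∑' t : ℕ, M.γ ^ t * ∑ s, stateDistFrom M π s₀ t s * ∑ a, π s a * M.r s a

/-- State-action value function `Q_π(s,a)`. -/
def Qval (M : FinMDP S A) (π : S → A → ℝ) (s : S) (a : A) : ℝ :=
  M.r s a + M.γ * ∑ s', M.P s a s' * Vval M π s'

/-- Advantage function `A_π(s,a) = Q_π(s,a) - V_π(s)`. -/
def Adv (M : FinMDP S A) (π : S → A → ℝ) (s : S) (a : A) : ℝ :=
  Qval M π s a - Vval M π s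

/-- Total variation distance between two distributions over actions. -/
def DTV (p q : A → ℝ) : ℝ := (1 / 2) * ∑ a, |p a - q a|

/-- KL divergence between two distributions over actions. -/
def DKL (p q : A → ℝ) : ℝ := ∑ a, p a * Real.log (p a / q a)

set_option linter.unusedSectionVars false
variable {M : FinMDP S A} {p q : S → A → ℝ}

lemma stepDist_sum_eq (M : FinMDP S A) (hp : IsPolicy p) (d : S → ℝ) :
    ∑ s', stepDist M p d s' = ∑ s, d s := by
  unfold stepDist
  rw [Finset.sum_comm]
  refine Finset.sum_congr rfl fun s _ => ?_
  rw [Finset.sum_comm]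
  have : ∀ a ∈ univ, ∑ s', d s * p s a * M.P s a s' = d s * p s a := by
    intro a _
    rw [← Finset.mul_sum, M.P_sum, mul_one]
  rw [Finset.sum_congr rfl this, ← Finset.mul_sum, hp.2, mul_one]

lemma stepDist_nonneg (M : FinMDP S A) (hp : IsPolicy p) {d : S → ℝ}
    (hd : ∀ s, 0 ≤ d s) (s' : S) : 0 ≤ stepDist M p d s' := by
  refine Finset.sum_nonneg fun s _ => Finset.sum_nonneg fun a _ => ?_
  exact mul_nonneg (mul_nonneg (hd s) (hp.1 s a)) (M.P_nonneg s a s')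

lemma stateDist_nonneg (M : FinMDP S A) (hp : IsPolicy p) (t : ℕ) (s : S) :
    0 ≤ stateDist M p t s := by
  induction t generalizing s with
  | zero => exact M.μ_nonneg s
  | succ t ih => exact stepDist_nonneg M hp ih s

lemma stateDist_sum (M : FinMDP S A) (hp : IsPolicy p) (t : ℕ) :
    ∑ s, stateDist M p t s = 1 := by
  induction t with
  | zero => exact M.μ_sum
  | succ t ih => rw [stateDist, stepDist_sum_eq M hp, ih]

lemma stateDistFrom_nonneg (M : FinMDP S A) (hp : IsPolicy p) (s₀ : S) (t : ℕ) (s : S) :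
    0 ≤ stateDistFrom M p s₀ t s := by
  induction t generalizing s with
  | zero => simp [stateDistFrom]; split <;> norm_num
  | succ t ih => exact stepDist_nonneg M hp ih s

lemma stateDistFrom_sum (M : FinMDP S A) (hp : IsPolicy p) (s₀ : S) (t : ℕ) :
    ∑ s, stateDistFrom M p s₀ t s = 1 := by
  induction t with
  | zero => simp [stateDistFrom]
  | succ t ih => rw [stateDistFrom, stepDist_sum_eq M hp, ih]

/-- `|⟨d, c⟩| ≤ ∑ |c|` for a probability vector `d`. -/
lemma abs_inner_le (d c : S → ℝ) (hd : ∀ s, 0 ≤ d s) (hsum : ∑ s, d s = 1) :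
    |∑ s, d s * c s| ≤ ∑ s, |c s| := by
  calc |∑ s, d s * c s| ≤ ∑ s, |d s * c s| := Finset.abs_sum_le_sum_abs _ _
    _ ≤ ∑ s, |c s| := by
        refine Finset.sum_le_sum fun s _ => ?_
        rw [abs_mul, abs_of_nonneg (hd s)]
        have h1 : d s ≤ 1 := by
          calc d s ≤ ∑ s', d s' := Finset.single_le_sum (fun i _ => hd i) (mem_univ s)
            _ = 1 := hsum
        nlinarith [abs_nonneg (c s)]

lemma summable_geom_bound {γ C : ℝ} (h0 : 0 ≤ γ) (h1 : γ < 1) (u : ℕ → ℝ)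
    (hu : ∀ t, |u t| ≤ C * γ ^ t) : Summable u := by
  refine Summable.of_norm (Summable.of_nonneg_of_le (fun t => norm_nonneg _)
    (fun t => hu t) ?_)
  exact (summable_geometric_of_lt_one h0 h1).mul_left C

lemma stepDist_linear (M : FinMDP S A) (p : S → A → ℝ) (c : S → ℝ) (d : S → S → ℝ) (s' : S) :
    stepDist M p (fun s => ∑ s₀, c s₀ * d s₀ s) s' = ∑ s₀, c s₀ * stepDist M p (d s₀) s' := by
  unfold stepDist
  have h1 : ∀ s a, (∑ s₀, c s₀ * d s₀ s) * p s a * M.P s a s'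
      = ∑ s₀, c s₀ * (d s₀ s * p s a * M.P s a s') := by
    intro s a
    rw [Finset.sum_mul, Finset.sum_mul]
    exact Finset.sum_congr rfl fun _ _ => by ring
  simp only [h1, Finset.mul_sum]
  calc ∑ s, ∑ a, ∑ s₀, c s₀ * (d s₀ s * p s a * M.P s a s')
      = ∑ s, ∑ s₀, ∑ a, c s₀ * (d s₀ s * p s a * M.P s a s') :=
        Finset.sum_congr rfl fun s _ => Finset.sum_comm
    _ = ∑ s₀, ∑ s, ∑ a, c s₀ * (d s₀ s * p s a * M.P s a s') := Finset.sum_comm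

lemma stateDist_decomp (M : FinMDP S A) (p : S → A → ℝ) (t : ℕ) (s : S) :
    stateDist M p t s = ∑ s₀, M.μ s₀ * stateDistFrom M p s₀ t s := by
  induction t generalizing s with
  | zero =>
      simp only [stateDist, stateDistFrom]
      rw [Finset.sum_eq_single s]
      · simp
      · intro b _ hb; simp [Ne.symm hb]
      · simp
  | succ t ih =>
      show stepDist M p (stateDist M p t) s = _
      have : stateDist M p t = fun s => ∑ s₀, M.μ s₀ * stateDistFrom M p s₀ t s := by
        funext s; exact ih s
      rw [this, stepDist_linear]
      rfl

lemma Jret_eq_mu_V (M : FinMDP S A) (hp : IsPolicy p) :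
    Jret M p = ∑ s₀, M.μ s₀ * Vval M p s₀ := by
  unfold Jret Vval
  have hsumm : ∀ s₀ ∈ univ, Summable (fun t : ℕ =>
      M.μ s₀ * (M.γ ^ t * ∑ s, stateDistFrom M p s₀ t s * ∑ a, p s a * M.r s a)) := by
    intro s₀ _
    refine summable_geom_bound M.γ_nonneg M.γ_lt_one _ (C := M.μ s₀ * ∑ s, |∑ a, p s a * M.r s a|) fun t => ?_
    rw [abs_mul, abs_mul, abs_of_nonneg (M.μ_nonneg s₀), abs_of_nonneg (pow_nonneg M.γ_nonneg t)]
    have := abs_inner_le (stateDistFrom M p s₀ t) (fun s => ∑ a, p s a * M.r s a)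
      (stateDistFrom_nonneg M hp s₀ t) (stateDistFrom_sum M hp s₀ t)
    calc M.μ s₀ * (M.γ ^ t * |∑ s, stateDistFrom M p s₀ t s * ∑ a, p s a * M.r s a|)
        ≤ M.μ s₀ * (M.γ ^ t * ∑ s, |∑ a, p s a * M.r s a|) := by
          refine mul_le_mul_of_nonneg_left ?_ (M.μ_nonneg s₀)
          exact mul_le_mul_of_nonneg_left this (pow_nonneg M.γ_nonneg t)
      _ = M.μ s₀ * (∑ s, |∑ a, p s a * M.r s a|) * M.γ ^ t := by ring
  calc (∑' t : ℕ, M.γ ^ t * ∑ s, stateDist M p t s * ∑ a, p s a * M.r s a)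
      = ∑' t : ℕ, ∑ s₀, M.μ s₀ * (M.γ ^ t * ∑ s, stateDistFrom M p s₀ t s * ∑ a, p s a * M.r s a) := by
        refine tsum_congr fun t => ?_
        have hd : ∀ s, stateDist M p t s = ∑ s₀, M.μ s₀ * stateDistFrom M p s₀ t s :=
          stateDist_decomp M p t
        calc M.γ ^ t * ∑ s, stateDist M p t s * ∑ a, p s a * M.r s a
            = ∑ s, ∑ s₀, M.γ ^ t * (M.μ s₀ * stateDistFrom M p s₀ t s * ∑ a, p s a * M.r s a) := by
              rw [Finset.mul_sum]
              refine Finset.sum_congr rfl fun s _ => ?_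
              rw [hd s, Finset.sum_mul, Finset.mul_sum]
          _ = ∑ s₀, ∑ s, M.γ ^ t * (M.μ s₀ * stateDistFrom M p s₀ t s * ∑ a, p s a * M.r s a) :=
              Finset.sum_comm
          _ = ∑ s₀, M.μ s₀ * (M.γ ^ t * ∑ s, stateDistFrom M p s₀ t s * ∑ a, p s a * M.r s a) := by
              refine Finset.sum_congr rfl fun s₀ _ => ?_
              rw [Finset.mul_sum, Finset.mul_sum]
              exact Finset.sum_congr rfl fun s _ => by ring
    _ = ∑ s₀, ∑' t : ℕ, M.μ s₀ * (M.γ ^ t * ∑ s, stateDistFrom M p s₀ t s * ∑ a, p s a * M.r s a) :=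
        Summable.tsum_finsetSum hsumm
    _ = ∑ s₀, M.μ s₀ * ∑' t : ℕ, M.γ ^ t * ∑ s, stateDistFrom M p s₀ t s * ∑ a, p s a * M.r s a := by
        refine Finset.sum_congr rfl fun s₀ _ => ?_
        rw [tsum_mul_left]

lemma tsum_telescope_zero {w : ℕ → ℝ} (h : Summable fun t => w (t + 1) - w t)
    (h0 : Filter.Tendsto w Filter.atTop (nhds 0)) : ∑' t, (w (t + 1) - w t) = -w 0 := by
  have hps := h.hasSum.tendsto_sum_nat
  have heq : (fun N => ∑ t ∈ Finset.range N, (w (t + 1) - w t)) = fun N => w N - w 0 := by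
    funext N; exact Finset.sum_range_sub w N
  rw [heq] at hps
  have h2 : Filter.Tendsto (fun N => w N - w 0) Filter.atTop (nhds (0 - w 0)) :=
    h0.sub_const _
  have := tendsto_nhds_unique hps h2
  simpa using this

lemma inner_step (M : FinMDP S A) (p : S → A → ℝ) (d V : S → ℝ) :
    ∑ s, d s * ∑ a, p s a * ∑ s', M.P s a s' * V s'
      = ∑ s', stepDist M p d s' * V s' := by
  calc ∑ s, d s * ∑ a, p s a * ∑ s', M.P s a s' * V s'
      = ∑ s, ∑ a, ∑ s', d s * p s a * M.P s a s' * V s' := by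
        refine Finset.sum_congr rfl fun s _ => ?_
        rw [Finset.mul_sum]
        refine Finset.sum_congr rfl fun a _ => ?_
        rw [Finset.mul_sum, Finset.mul_sum]
        exact Finset.sum_congr rfl fun s' _ => by ring
    _ = ∑ s, ∑ s', ∑ a, d s * p s a * M.P s a s' * V s' :=
        Finset.sum_congr rfl fun s _ => Finset.sum_comm
    _ = ∑ s', ∑ s, ∑ a, d s * p s a * M.P s a s' * V s' := Finset.sum_comm
    _ = ∑ s', stepDist M p d s' * V s' := by
        refine Finset.sum_congr rfl fun s' _ => ?_
        rw [stepDist, Finset.sum_mul]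
        exact Finset.sum_congr rfl fun s _ => by rw [Finset.sum_mul]

/-- Per-state expansion of the expected advantage under `q`. -/
lemma adv_expand (M : FinMDP S A) (π q : S → A → ℝ) (hq : IsPolicy q) (s : S) :
    ∑ a, q s a * Adv M π s a
      = (∑ a, q s a * M.r s a)
        + M.γ * ∑ a, q s a * ∑ s', M.P s a s' * Vval M π s'
        - Vval M π s := by
  unfold Adv Qval
  have : ∀ a, q s a * (M.r s a + M.γ * ∑ s', M.P s a s' * Vval M π s' - Vval M π s)
      = q s a * M.r s a + M.γ * (q s a * ∑ s', M.P s a s' * Vval M π s')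
        - q s a * Vval M π s := fun a => by ring
  simp only [this]
  rw [Finset.sum_sub_distrib, Finset.sum_add_distrib, ← Finset.mul_sum,
    ← Finset.sum_mul, hq.2 s, one_mul]

/-- Inner product of a distribution with the expected advantage, in step form. -/
lemma adv_inner (M : FinMDP S A) (π q : S → A → ℝ) (hq : IsPolicy q) (d : S → ℝ) :
    ∑ s, d s * ∑ a, q s a * Adv M π s a
      = (∑ s, d s * ∑ a, q s a * M.r s a)
        + M.γ * ∑ s', stepDist M q d s' * Vval M π s'
        - ∑ s, d s * Vval M π s := by
  have h1 : ∀ s, d s * ∑ a, q s a * Adv M π s a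
      = d s * (∑ a, q s a * M.r s a)
        + M.γ * (d s * ∑ a, q s a * ∑ s', M.P s a s' * Vval M π s')
        - d s * Vval M π s := by
    intro s; rw [adv_expand M π q hq s]; ring
  simp only [h1]
  rw [Finset.sum_sub_distrib, Finset.sum_add_distrib, ← Finset.mul_sum,
    inner_step M q d (Vval M π)]

lemma inner_bound (M : FinMDP S A) (hq : IsPolicy q) (c : S → ℝ) (t : ℕ) :
    |M.γ ^ t * ∑ s, stateDist M q t s * c s| ≤ (∑ s, |c s|) * M.γ ^ t := by
  rw [abs_mul, abs_pow, abs_of_nonneg M.γ_nonneg, mul_comm]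
  exact mul_le_mul_of_nonneg_right
    (abs_inner_le _ c (stateDist_nonneg M hq t) (stateDist_sum M hq t))
    (pow_nonneg M.γ_nonneg t)

lemma summable_inner (M : FinMDP S A) (hq : IsPolicy q) (c : S → ℝ) :
    Summable fun t : ℕ => M.γ ^ t * ∑ s, stateDist M q t s * c s :=
  summable_geom_bound M.γ_nonneg M.γ_lt_one _ (C := ∑ s, |c s|) (inner_bound M hq c)

lemma tendsto_inner (M : FinMDP S A) (hq : IsPolicy q) (c : S → ℝ) :
    Filter.Tendsto (fun t : ℕ => M.γ ^ t * ∑ s, stateDist M q t s * c s)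
      Filter.atTop (nhds 0) := by
  refine squeeze_zero_norm (fun t => inner_bound M hq c t) ?_
  simpa using
    (tendsto_pow_atTop_nhds_zero_of_lt_one M.γ_nonneg M.γ_lt_one).const_mul (∑ s, |c s|)

/-- Performance difference lemma, tsum form. -/
lemma pdl_tsum (M : FinMDP S A) {π π' : S → A → ℝ} (hπ : IsPolicy π) (hπ' : IsPolicy π') :
    ∑' t : ℕ, M.γ ^ t * ∑ s, stateDist M π' t s * ∑ a, π' s a * Adv M π s a
      = Jret M π' - Jret M π := by
  set V : S → ℝ := Vval M π with hV
  set w : ℕ → ℝ := fun t => M.γ ^ t * ∑ s, stateDist M π' t s * V s with hw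
  have hterm : ∀ t, M.γ ^ t * ∑ s, stateDist M π' t s * ∑ a, π' s a * Adv M π s a
      = M.γ ^ t * (∑ s, stateDist M π' t s * ∑ a, π' s a * M.r s a) + (w (t + 1) - w t) := by
    intro t
    rw [adv_inner M π π' hπ' (stateDist M π' t)]
    have hstep : stepDist M π' (stateDist M π' t) = stateDist M π' (t + 1) := rfl
    rw [hstep]
    simp only [hw]
    rw [pow_succ]
    ring
  have hsum1 := summable_inner M hπ' (fun s => ∑ a, π' s a * M.r s a)
  have hw_sum : Summable w := summable_inner M hπ' V
  have hshift : Summable fun t => w (t + 1) := (summable_nat_add_iff 1).2 hw_sum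
  have hsum2 : Summable fun t => w (t + 1) - w t := hshift.sub hw_sum
  have htend : Filter.Tendsto w Filter.atTop (nhds 0) := tendsto_inner M hπ' V
  rw [tsum_congr hterm, Summable.tsum_add hsum1 hsum2, tsum_telescope_zero hsum2 htend]
  have hw0 : w 0 = ∑ s, M.μ s * V s := by simp [hw, stateDist]
  have hJ : (∑' t : ℕ, M.γ ^ t * ∑ s, stateDist M π' t s * ∑ a, π' s a * M.r s a)
      = Jret M π' := rfl
  rw [hw0, hJ, Jret_eq_mu_V M hπ]
  ring

lemma abs_stepDist_le (M : FinMDP S A) (hq : IsPolicy q) (x : S → ℝ) (s' : S) :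
    |stepDist M q x s'| ≤ stepDist M q (fun s => |x s|) s' := by
  unfold stepDist
  refine (Finset.abs_sum_le_sum_abs _ _).trans (Finset.sum_le_sum fun s _ => ?_)
  refine (Finset.abs_sum_le_sum_abs _ _).trans (Finset.sum_le_sum fun a _ => ?_)
  rw [abs_mul, abs_mul, abs_of_nonneg (hq.1 s a), abs_of_nonneg (M.P_nonneg s a s')]

lemma l1_step (M : FinMDP S A) (hq : IsPolicy q) (x : S → ℝ) :
    ∑ s', |stepDist M q x s'| ≤ ∑ s, |x s| :=
  (Finset.sum_le_sum fun s' _ => abs_stepDist_le M hq x s').trans_eq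
    (stepDist_sum_eq M hq _)

lemma stepDist_sub (M : FinMDP S A) (p : S → A → ℝ) (x y : S → ℝ) (s' : S) :
    stepDist M p (fun s => x s - y s) s' = stepDist M p x s' - stepDist M p y s' := by
  unfold stepDist
  rw [← Finset.sum_sub_distrib]
  refine Finset.sum_congr rfl fun s _ => ?_
  rw [← Finset.sum_sub_distrib]
  exact Finset.sum_congr rfl fun a _ => by ring

lemma l1_policy_diff (M : FinMDP S A) (p q : S → A → ℝ) {d : S → ℝ} (hd : ∀ s, 0 ≤ d s) :
    ∑ s', |stepDist M p d s' - stepDist M q d s'| ≤ ∑ s, d s * ∑ a, |p s a - q s a| := by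
  have h1 : ∀ s', stepDist M p d s' - stepDist M q d s'
      = ∑ s, ∑ a, d s * (p s a - q s a) * M.P s a s' := by
    intro s'
    unfold stepDist
    rw [← Finset.sum_sub_distrib]
    refine Finset.sum_congr rfl fun s _ => ?_
    rw [← Finset.sum_sub_distrib]
    exact Finset.sum_congr rfl fun a _ => by ring
  calc ∑ s', |stepDist M p d s' - stepDist M q d s'|
      ≤ ∑ s', ∑ s, ∑ a, d s * |p s a - q s a| * M.P s a s' := by
        refine Finset.sum_le_sum fun s' _ => ?_
        rw [h1]
        refine (Finset.abs_sum_le_sum_abs _ _).trans (Finset.sum_le_sum fun s _ => ?_)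
        refine (Finset.abs_sum_le_sum_abs _ _).trans (Finset.sum_le_sum fun a _ => ?_)
        rw [abs_mul, abs_mul, abs_of_nonneg (hd s), abs_of_nonneg (M.P_nonneg s a s')]
    _ = ∑ s, ∑ s', ∑ a, d s * |p s a - q s a| * M.P s a s' := Finset.sum_comm
    _ = ∑ s, ∑ a, ∑ s', d s * |p s a - q s a| * M.P s a s' :=
        Finset.sum_congr rfl fun s _ => Finset.sum_comm
    _ = ∑ s, d s * ∑ a, |p s a - q s a| := by
        refine Finset.sum_congr rfl fun s _ => ?_
        rw [Finset.mul_sum]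
        refine Finset.sum_congr rfl fun a _ => ?_
        rw [← Finset.mul_sum, M.P_sum, mul_one]

lemma l1_growth (M : FinMDP S A) {π π' : S → A → ℝ} (hπ : IsPolicy π) (hπ' : IsPolicy π') :
    ∀ t, ∑ s, |stateDist M π' t s - stateDist M π t s|
      ≤ ∑ k ∈ Finset.range t, ∑ s, stateDist M π k s * ∑ a, |π' s a - π s a| := by
  intro t
  induction t with
  | zero => simp [stateDist]
  | succ t ih =>
      have key : ∀ s', stateDist M π' (t + 1) s' - stateDist M π (t + 1) s'
          = stepDist M π' (fun s => stateDist M π' t s - stateDist M π t s) s'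
            + (stepDist M π' (stateDist M π t) s' - stepDist M π (stateDist M π t) s') := by
        intro s'
        have h := stepDist_sub M π' (stateDist M π' t) (stateDist M π t) s'
        show stepDist M π' (stateDist M π' t) s' - stepDist M π (stateDist M π t) s' = _
        rw [h]; ring
      calc ∑ s', |stateDist M π' (t + 1) s' - stateDist M π (t + 1) s'|
          ≤ ∑ s', (|stepDist M π' (fun s => stateDist M π' t s - stateDist M π t s) s'|
              + |stepDist M π' (stateDist M π t) s' - stepDist M π (stateDist M π t) s'|) := by
            refine Finset.sum_le_sum fun s' _ => ?_
            rw [key s']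
            exact abs_add_le _ _
        _ = (∑ s', |stepDist M π' (fun s => stateDist M π' t s - stateDist M π t s) s'|)
            + ∑ s', |stepDist M π' (stateDist M π t) s' - stepDist M π (stateDist M π t) s'| :=
            Finset.sum_add_distrib
        _ ≤ (∑ s, |stateDist M π' t s - stateDist M π t s|)
            + ∑ s, stateDist M π t s * ∑ a, |π' s a - π s a| :=
            add_le_add (l1_step M hπ' _) (l1_policy_diff M π' π (stateDist_nonneg M hπ t))
        _ ≤ (∑ k ∈ Finset.range t, ∑ s, stateDist M π k s * ∑ a, |π' s a - π s a|)
            + ∑ s, stateDist M π t s * ∑ a, |π' s a - π s a| := add_le_add ih le_rfl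
        _ = ∑ k ∈ Finset.range (t + 1), ∑ s, stateDist M π k s * ∑ a, |π' s a - π s a| :=
            (Finset.sum_range_succ _ t).symm

lemma sum_exchange (γ : ℝ) (δ : ℕ → ℝ) (N : ℕ) :
    ∑ t ∈ Finset.range N, γ ^ t * ∑ k ∈ Finset.range t, δ k
      = ∑ k ∈ Finset.range N, δ k * ∑ t ∈ Finset.Ico (k + 1) N, γ ^ t := by
  induction N with
  | zero => simp
  | succ N ih =>
      rw [Finset.sum_range_succ, ih,
        Finset.sum_range_succ (f := fun k => δ k * ∑ t ∈ Finset.Ico (k + 1) (N + 1), γ ^ t),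
        Finset.Ico_self, Finset.sum_empty, mul_zero, add_zero]
      have h : ∀ k ∈ Finset.range N, δ k * ∑ t ∈ Finset.Ico (k + 1) (N + 1), γ ^ t
          = δ k * ∑ t ∈ Finset.Ico (k + 1) N, γ ^ t + δ k * γ ^ N := by
        intro k hk
        rw [Finset.sum_Ico_succ_top (Nat.succ_le_of_lt (Finset.mem_range.1 hk)), mul_add]
      rw [Finset.sum_congr rfl h, Finset.sum_add_distrib, ← Finset.sum_mul]
      ring

lemma geom_Ico_le {γ : ℝ} (h0 : 0 ≤ γ) (h1 : γ < 1) (k N : ℕ) :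
    ∑ t ∈ Finset.Ico (k + 1) N, γ ^ t ≤ γ ^ (k + 1) / (1 - γ) := by
  rw [Finset.sum_Ico_eq_sum_range]
  have hp : ∀ i, γ ^ (k + 1 + i) = γ ^ (k + 1) * γ ^ i := fun i => pow_add γ _ _
  simp only [hp]
  rw [← Finset.mul_sum, div_eq_mul_inv]
  refine mul_le_mul_of_nonneg_left ?_ (pow_nonneg h0 _)
  have hs := summable_geometric_of_lt_one h0 h1
  calc ∑ i ∈ Finset.range (N - (k + 1)), γ ^ i
      ≤ ∑' i : ℕ, γ ^ i := hs.sum_le_tsum _ (fun i _ => pow_nonneg h0 i)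
    _ = (1 - γ)⁻¹ := tsum_geometric_of_lt_one h0 h1

lemma tsum_u_le {γ : ℝ} (h0 : 0 ≤ γ) (h1 : γ < 1) (u δ : ℕ → ℝ)
    (hu0 : ∀ t, 0 ≤ u t) (hδ0 : ∀ k, 0 ≤ δ k)
    (hδsum : Summable fun k => γ ^ k * δ k)
    (hle : ∀ t, u t ≤ ∑ k ∈ Finset.range t, δ k) :
    ∑' t, γ ^ t * u t ≤ γ / (1 - γ) * ∑' k, γ ^ k * δ k := by
  refine Real.tsum_le_of_sum_range_le (fun t => mul_nonneg (pow_nonneg h0 t) (hu0 t))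
    fun N => ?_
  calc ∑ t ∈ Finset.range N, γ ^ t * u t
      ≤ ∑ t ∈ Finset.range N, γ ^ t * ∑ k ∈ Finset.range t, δ k :=
        Finset.sum_le_sum fun t _ => mul_le_mul_of_nonneg_left (hle t) (pow_nonneg h0 t)
    _ = ∑ k ∈ Finset.range N, δ k * ∑ t ∈ Finset.Ico (k + 1) N, γ ^ t := sum_exchange γ δ N
    _ ≤ ∑ k ∈ Finset.range N, δ k * (γ ^ (k + 1) / (1 - γ)) :=
        Finset.sum_le_sum fun k _ =>
          mul_le_mul_of_nonneg_left (geom_Ico_le h0 h1 k N) (hδ0 k)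
    _ = ∑ k ∈ Finset.range N, γ / (1 - γ) * (γ ^ k * δ k) := by
        refine Finset.sum_congr rfl fun k _ => ?_
        rw [pow_succ]
        ring
    _ = γ / (1 - γ) * ∑ k ∈ Finset.range N, γ ^ k * δ k := by rw [← Finset.mul_sum]
    _ ≤ γ / (1 - γ) * ∑' k, γ ^ k * δ k := by
        refine mul_le_mul_of_nonneg_left
          (hδsum.sum_le_tsum _ (fun k _ => mul_nonneg (pow_nonneg h0 k) (hδ0 k)))
          (div_nonneg h0 (by linarith))

lemma stateDist_le_one (M : FinMDP S A) (hq : IsPolicy q) (t : ℕ) (s : S) :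
    stateDist M q t s ≤ 1 := by
  calc stateDist M q t s ≤ ∑ s', stateDist M q t s' :=
        Finset.single_le_sum (fun i _ => stateDist_nonneg M hq t i) (mem_univ s)
    _ = 1 := stateDist_sum M hq t

lemma summable_dvisit (M : FinMDP S A) (hq : IsPolicy q) (s : S) :
    Summable fun t : ℕ => M.γ ^ t * stateDist M q t s := by
  refine summable_geom_bound M.γ_nonneg M.γ_lt_one _ (C := 1) fun t => ?_
  rw [abs_mul, abs_pow, abs_of_nonneg M.γ_nonneg,
    abs_of_nonneg (stateDist_nonneg M hq t s), one_mul]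
  exact mul_le_of_le_one_right (pow_nonneg M.γ_nonneg t) (stateDist_le_one M hq t s)

lemma dVisit_inner (M : FinMDP S A) (hq : IsPolicy q) (g : S → ℝ) :
    ∑ s, dVisit M q s * g s
      = (1 - M.γ) * ∑' t : ℕ, M.γ ^ t * ∑ s, stateDist M q t s * g s := by
  unfold dVisit
  have hsumm : ∀ s ∈ univ, Summable fun t : ℕ => M.γ ^ t * stateDist M q t s * g s :=
    fun s _ => (summable_dvisit M hq s).mul_right (g s)
  calc ∑ s, ((1 - M.γ) * ∑' t : ℕ, M.γ ^ t * stateDist M q t s) * g s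
      = ∑ s, (1 - M.γ) * ∑' t : ℕ, M.γ ^ t * stateDist M q t s * g s := by
        refine Finset.sum_congr rfl fun s _ => ?_
        rw [mul_assoc, ← tsum_mul_right]
    _ = (1 - M.γ) * ∑ s, ∑' t : ℕ, M.γ ^ t * stateDist M q t s * g s := by
        rw [← Finset.mul_sum]
    _ = (1 - M.γ) * ∑' t : ℕ, ∑ s, M.γ ^ t * stateDist M q t s * g s := by
        rw [← Summable.tsum_finsetSum hsumm]
    _ = (1 - M.γ) * ∑' t : ℕ, M.γ ^ t * ∑ s, stateDist M q t s * g s := by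
        congr 1
        refine tsum_congr fun t => ?_
        rw [Finset.mul_sum]
        exact Finset.sum_congr rfl fun s _ => by ring

lemma dVisit_l1 (M : FinMDP S A) {π π' : S → A → ℝ} (hπ : IsPolicy π) (hπ' : IsPolicy π') :
    ∑ s, |dVisit M π' s - dVisit M π s|
      ≤ M.γ * ∑' k : ℕ, M.γ ^ k * ∑ s, stateDist M π k s * ∑ a, |π' s a - π s a| := by
  set c : S → ℝ := fun s => ∑ a, |π' s a - π s a| with hc
  set δ : ℕ → ℝ := fun k => ∑ s, stateDist M π k s * c s with hδ
  set u : ℕ → ℝ := fun t => ∑ s, |stateDist M π' t s - stateDist M π t s| with hu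
  have hδ0 : ∀ k, 0 ≤ δ k := fun k =>
    Finset.sum_nonneg fun s _ => mul_nonneg (stateDist_nonneg M hπ k s)
      (Finset.sum_nonneg fun a _ => abs_nonneg _)
  have hu0 : ∀ t, 0 ≤ u t := fun t => Finset.sum_nonneg fun s _ => abs_nonneg _
  have hδsum : Summable fun k => M.γ ^ k * δ k := summable_inner M hπ c
  have hle : ∀ t, u t ≤ ∑ k ∈ Finset.range t, δ k := l1_growth M hπ hπ'
  have hsummΔ : ∀ s, Summable fun t : ℕ =>
      M.γ ^ t * (stateDist M π' t s - stateDist M π t s) := by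
    intro s
    have h1 := (summable_dvisit M hπ' s).sub (summable_dvisit M hπ s)
    refine h1.congr fun t => by ring
  have hsummΔa : ∀ s ∈ univ, Summable fun t : ℕ =>
      M.γ ^ t * |stateDist M π' t s - stateDist M π t s| := by
    intro s _
    refine summable_geom_bound M.γ_nonneg M.γ_lt_one _ (C := 2) fun t => ?_
    rw [abs_mul, abs_pow, abs_of_nonneg M.γ_nonneg, abs_abs, mul_comm]
    refine mul_le_mul_of_nonneg_right ?_ (pow_nonneg M.γ_nonneg t)
    have h1 := stateDist_nonneg M hπ' t s
    have h2 := stateDist_nonneg M hπ t s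
    have h3 := stateDist_le_one M hπ' t s
    have h4 := stateDist_le_one M hπ t s
    rw [abs_le]; constructor <;> linarith
  have hsub : ∀ s, dVisit M π' s - dVisit M π s
      = (1 - M.γ) * ∑' t : ℕ, M.γ ^ t * (stateDist M π' t s - stateDist M π t s) := by
    intro s
    unfold dVisit
    rw [← mul_sub, ← Summable.tsum_sub (summable_dvisit M hπ' s) (summable_dvisit M hπ s)]
    congr 1
    exact tsum_congr fun t => by ring
  have hγ1 : (0:ℝ) < 1 - M.γ := by linarith [M.γ_lt_one]
  calc ∑ s, |dVisit M π' s - dVisit M π s|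
      ≤ ∑ s, (1 - M.γ) * ∑' t : ℕ, M.γ ^ t * |stateDist M π' t s - stateDist M π t s| := by
        refine Finset.sum_le_sum fun s _ => ?_
        rw [hsub s, abs_mul, abs_of_nonneg hγ1.le]
        refine mul_le_mul_of_nonneg_left ?_ hγ1.le
        have := norm_tsum_le_tsum_norm (f := fun t : ℕ =>
          M.γ ^ t * (stateDist M π' t s - stateDist M π t s)) ?_
        · refine this.trans_eq (tsum_congr fun t => ?_)
          rw [Real.norm_eq_abs, abs_mul, abs_pow, abs_of_nonneg M.γ_nonneg]
        · refine (hsummΔa s (mem_univ s)).congr fun t => ?_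
          rw [Real.norm_eq_abs, abs_mul, abs_pow, abs_of_nonneg M.γ_nonneg]
    _ = (1 - M.γ) * ∑' t : ℕ, M.γ ^ t * u t := by
        rw [← Finset.mul_sum, ← Summable.tsum_finsetSum hsummΔa]
        congr 1
        refine tsum_congr fun t => ?_
        rw [hu, Finset.mul_sum]
    _ ≤ (1 - M.γ) * (M.γ / (1 - M.γ) * ∑' k, M.γ ^ k * δ k) := by
        exact mul_le_mul_of_nonneg_left
          (tsum_u_le M.γ_nonneg M.γ_lt_one u δ hu0 hδ0 hδsum hle) hγ1.le
    _ = M.γ * ∑' k : ℕ, M.γ ^ k * δ k := by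
        field_simp

/-- Surrogate performance-difference bound (Achiam et al.). -/
theorem surrogate_performance_bound [Nonempty S] (M : FinMDP S A) (π π' : S → A → ℝ)
    (hπ : IsPolicy π) (hπ' : IsPolicy π') (hpos : ∀ s a, 0 < π s a) :
    (∑ s, dVisit M π s * ∑ a, π s a * (π' s a / π s a * Adv M π s a)) / (1 - M.γ)
        - 2 * M.γ * (univ.sup' univ_nonempty fun s => |∑ a, π' s a * Adv M π s a|)
            / (1 - M.γ) ^ 2 * ∑ s, dVisit M π s * DTV (π' s) (π s)
      ≤ Jret M π' - Jret M π ∧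
    Jret M π' - Jret M π ≤
      (∑ s, dVisit M π s * ∑ a, π s a * (π' s a / π s a * Adv M π s a)) / (1 - M.γ)
        + 2 * M.γ * (univ.sup' univ_nonempty fun s => |∑ a, π' s a * Adv M π s a|)
            / (1 - M.γ) ^ 2 * ∑ s, dVisit M π s * DTV (π' s) (π s) := by
  have hγ1 : (0:ℝ) < 1 - M.γ := by linarith [M.γ_lt_one]
  have hne : (1 - M.γ) ≠ 0 := ne_of_gt hγ1
  set f : S → ℝ := fun s => ∑ a, π' s a * Adv M π s a with hf
  set ε : ℝ := univ.sup' univ_nonempty fun s => |∑ a, π' s a * Adv M π s a| with hε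
  have hεb : ∀ s, |f s| ≤ ε := fun s =>
    Finset.le_sup' (fun s => |∑ a, π' s a * Adv M π s a|) (mem_univ s)
  have hεnn : 0 ≤ ε := le_trans (abs_nonneg _) (hεb (Classical.arbitrary S))
  have hL : (∑ s, dVisit M π s * ∑ a, π s a * (π' s a / π s a * Adv M π s a))
      = ∑ s, dVisit M π s * f s := by
    refine Finset.sum_congr rfl fun s _ => ?_
    congr 1
    refine Finset.sum_congr rfl fun a _ => ?_
    have hne' : π s a ≠ 0 := (hpos s a).ne'
    field_simp
  have hPDL : Jret M π' - Jret M π = (∑ s, dVisit M π' s * f s) / (1 - M.γ) := by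
    rw [← pdl_tsum M hπ hπ', dVisit_inner M hπ' f, mul_div_cancel_left₀ _ hne]
  have hdiff : Jret M π' - Jret M π
      - (∑ s, dVisit M π s * ∑ a, π s a * (π' s a / π s a * Adv M π s a)) / (1 - M.γ)
      = (∑ s, (dVisit M π' s - dVisit M π s) * f s) / (1 - M.γ) := by
    rw [hL, hPDL, div_sub_div_same]
    congr 1
    rw [← Finset.sum_sub_distrib]
    exact Finset.sum_congr rfl fun s _ => (sub_mul _ _ _).symm
  have hTV : M.γ * ∑' k : ℕ, M.γ ^ k * ∑ s, stateDist M π k s * ∑ a, |π' s a - π s a|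
      = 2 * M.γ / (1 - M.γ) * ∑ s, dVisit M π s * DTV (π' s) (π s) := by
    have h1 : ∑ s, dVisit M π s * DTV (π' s) (π s)
        = (1/2) * ∑ s, dVisit M π s * ∑ a, |π' s a - π s a| := by
      rw [Finset.mul_sum]
      refine Finset.sum_congr rfl fun s _ => ?_
      rw [DTV]; ring
    rw [h1, dVisit_inner M hπ (fun s => ∑ a, |π' s a - π s a|)]
    field_simp
  have hX : |∑ s, (dVisit M π' s - dVisit M π s) * f s|
      ≤ ε * (2 * M.γ / (1 - M.γ) * ∑ s, dVisit M π s * DTV (π' s) (π s)) := by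
    calc |∑ s, (dVisit M π' s - dVisit M π s) * f s|
        ≤ ∑ s, |dVisit M π' s - dVisit M π s| * |f s| := by
          refine (Finset.abs_sum_le_sum_abs _ _).trans ?_
          exact le_of_eq (Finset.sum_congr rfl fun s _ => abs_mul _ _)
      _ ≤ ∑ s, |dVisit M π' s - dVisit M π s| * ε :=
          Finset.sum_le_sum fun s _ => mul_le_mul_of_nonneg_left (hεb s) (abs_nonneg _)
      _ = ε * ∑ s, |dVisit M π' s - dVisit M π s| := by rw [← Finset.sum_mul]; ring
      _ ≤ ε * (M.γ * ∑' k : ℕ, M.γ ^ k * ∑ s, stateDist M π k s * ∑ a, |π' s a - π s a|) :=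
          mul_le_mul_of_nonneg_left (dVisit_l1 M hπ hπ') hεnn
      _ = ε * (2 * M.γ / (1 - M.γ) * ∑ s, dVisit M π s * DTV (π' s) (π s)) := by rw [hTV]
  have habs : |Jret M π' - Jret M π
      - (∑ s, dVisit M π s * ∑ a, π s a * (π' s a / π s a * Adv M π s a)) / (1 - M.γ)|
      ≤ 2 * M.γ * ε / (1 - M.γ) ^ 2 * ∑ s, dVisit M π s * DTV (π' s) (π s) := by
    rw [hdiff, abs_div, abs_of_nonneg hγ1.le, div_le_iff₀ hγ1]
    refine hX.trans (le_of_eq ?_)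
    field_simp
  obtain ⟨h1, h2⟩ := abs_le.1 habs
  constructor <;> linarith
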